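/- Let p be prime and A ⊆ ℤ_{p^n} × ℤ_p. For d = (d_1, d_2), define planes H(d, t) = {x ∈ ℤ_{p^n} × ℤ_p : x_1 d_1 + p^{n−1} x_2 d_2 = t in ℤ_{p^n}}. Then the Fourier transform of 1_A vanishes at d if and only if |A ∩ H(d, t)| = |A ∩ H(d, t′)| whenever t ≡ t′ (mod p^{n−1}). -/

import Mathlib

open Finset Complex

attribute [local instance] Classical.propDecidable

/-- The Fourier transform of the indicator function of `A ⊆ ℤ_{p^n} × ℤ_p` at
`d = (d₁, d₂)`. -/
noncomputable def fourierA (p n : ℕ) (A : Finset (ZMod (p ^ n) × ZMod p))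
    (d : ZMod (p ^ n) × ZMod p) : ℂ :=
  ∑ x ∈ A, Complex.exp (2 * Real.pi * Complex.I *
    ((x.1.val * d.1.val : ℕ) / (p ^ n : ℕ) + (x.2.val * d.2.val : ℕ) / (p : ℕ) : ℂ))

/-- The inner product `⟨x, d⟩ = x₁d₁ + p^{n-1}·x₂d₂ ∈ ℤ_{p^n}`. -/
def inner' (p n : ℕ) (x d : ZMod (p ^ n) × ZMod p) : ZMod (p ^ n) :=
  x.1 * d.1 + (p : ZMod (p ^ n)) ^ (n - 1) * ((x.2 * d.2).val : ZMod (p ^ n))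

/-- Equidistribution: the Fourier transform of `1_A` vanishes at `d` iff `A` meets the
planes `H(d, t)` and `H(d, t')` in sets of the same cardinality whenever
`t ≡ t' (mod p^{n-1})`. -/
theorem fourier_zero_iff_equidistributed (p n : ℕ) (hp : p.Prime) (hn : 1 ≤ n)
    (A : Finset (ZMod (p ^ n) × ZMod p)) (d : ZMod (p ^ n) × ZMod p) :
    fourierA p n A d = 0 ↔
      ∀ t t' : ZMod (p ^ n), t.val ≡ t'.val [MOD p ^ (n - 1)] →
        (A.filter fun x => inner' p n x d = t).card =
          (A.filter fun x => inner' p n x d = t').card := by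
  haveI : NeZero (p ^ n) := ⟨pow_ne_zero n hp.ne_zero⟩
  haveI : NeZero p := ⟨hp.ne_zero⟩
  set m := p ^ (n - 1) with hm
  have hP0 : 0 < p ^ n := pow_pos hp.pos _
  have hm0 : 0 < m := pow_pos hp.pos _
  have hPm : p ^ n = m * p := by rw [hm, ← pow_succ, Nat.sub_add_cancel hn]
  set ζ : ℂ := Complex.exp (2 * Real.pi * Complex.I / ((p ^ n : ℕ) : ℂ)) with hζdef
  have hζ : IsPrimitiveRoot ζ (p ^ n) := Complex.isPrimitiveRoot_exp _ hP0.ne'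
  have hζpow : ∀ k : ℕ, ζ ^ k =
      Complex.exp (2 * Real.pi * Complex.I * ((k : ℂ) / ((p ^ n : ℕ) : ℂ))) := by
    intro k
    rw [hζdef, ← Complex.exp_nat_mul]
    congr 1
    ring
  -- the fiber counting function
  set c : ℕ → ℕ := fun k => (A.filter fun x => inner' p n x d = ((k : ℕ) : ZMod (p ^ n))).card
    with hc
  -- key pointwise identity
  have key : ∀ x : ZMod (p ^ n) × ZMod p,
      Complex.exp (2 * Real.pi * Complex.I *
        ((x.1.val * d.1.val : ℕ) / (p ^ n : ℕ) + (x.2.val * d.2.val : ℕ) / (p : ℕ) : ℂ))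
      = ζ ^ (inner' p n x d).val := by
    intro x
    set a := x.1.val * d.1.val with ha
    set b := x.2.val * d.2.val with hb
    set N := a + m * b with hN
    -- inner' equals cast of N
    have hinner : inner' p n x d = ((N : ℕ) : ZMod (p ^ n)) := by
      have hvm : (x.2 * d.2).val = b % p := by rw [ZMod.val_mul]
      have hpn : (p : ZMod (p ^ n)) ^ n = 0 := by
        rw [← Nat.cast_pow, ZMod.natCast_self]
      have hsplit : ((b : ℕ) : ZMod (p ^ n))
          = (p : ZMod (p ^ n)) * ((b / p : ℕ) : ZMod (p ^ n)) + ((b % p : ℕ) : ZMod (p ^ n)) := by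
        conv_lhs => rw [← Nat.div_add_mod b p]
        push_cast
        ring
      have hmul : (p : ZMod (p ^ n)) ^ (n - 1) * ((b % p : ℕ) : ZMod (p ^ n))
          = (p : ZMod (p ^ n)) ^ (n - 1) * ((b : ℕ) : ZMod (p ^ n)) := by
        rw [hsplit, mul_add, ← mul_assoc, ← pow_succ, Nat.sub_add_cancel hn, hpn]
        ring
      rw [inner', hvm, hmul, hN, ha, hb]
      push_cast [ZMod.natCast_val, ZMod.cast_id, hm]
      ring
    -- the exponential identity
    have hexp : Complex.exp (2 * Real.pi * Complex.I *
        ((a : ℕ) / (p ^ n : ℕ) + (b : ℕ) / (p : ℕ) : ℂ)) = ζ ^ N := by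
      rw [hζpow]
      congr 1
      have hp0 : ((p : ℕ) : ℂ) ≠ 0 := Nat.cast_ne_zero.mpr hp.ne_zero
      have hpn0 : ((p ^ n : ℕ) : ℂ) ≠ 0 := Nat.cast_ne_zero.mpr hP0.ne'
      have hcast : ((p ^ n : ℕ) : ℂ) = (m : ℕ) * (p : ℕ) := by
        rw [hPm]; push_cast; ring
      rw [hN]
      push_cast
      have hcast2 : (p : ℂ) ^ n = ((m : ℕ) : ℂ) * ((p : ℕ) : ℂ) := by
        rw [← Nat.cast_pow, hPm]; push_cast; ring
      rw [hcast2]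
      have hm0' : ((m : ℕ) : ℂ) ≠ 0 := Nat.cast_ne_zero.mpr hm0.ne'
      field_simp
    have hval : (inner' p n x d).val = N % (p ^ n) := by
      rw [hinner, ZMod.val_natCast]
    have hζP : ζ ^ (p ^ n) = 1 := hζ.pow_eq_one
    rw [hexp, hval]
    conv_lhs => rw [← Nat.div_add_mod N (p ^ n)]
    rw [pow_add, pow_mul, hζP, one_pow, one_mul]
  -- Fourier transform as sum over t
  have hsum : fourierA p n A d = ∑ t : ZMod (p ^ n),
      ((A.filter fun x => inner' p n x d = t).card : ℂ) * ζ ^ t.val := by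
    rw [fourierA,
      ← Finset.sum_fiberwise_of_maps_to (g := fun x => inner' p n x d)
        (fun x _ => Finset.mem_univ _)]
    refine Finset.sum_congr rfl fun t _ => ?_
    rw [Finset.sum_congr rfl (fun x hx => by
      rw [key x, (Finset.mem_filter.1 hx).2]), Finset.sum_const, nsmul_eq_mul]
  -- rewrite as double sum
  have hsum2 : fourierA p n A d =
      ∑ r ∈ Finset.range m, ∑ s ∈ Finset.range p, (c (r + s * m) : ℂ) * ζ ^ (r + s * m) := by
    rw [hsum]
    have h1 : ∑ t : ZMod (p ^ n), ((A.filter fun x => inner' p n x d = t).card : ℂ) * ζ ^ t.val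
        = ∑ k ∈ Finset.range (p ^ n), (c k : ℂ) * ζ ^ k := by
      refine Finset.sum_nbij' (fun t => t.val) (fun k => ((k : ℕ) : ZMod (p ^ n)))
        (fun t _ => Finset.mem_range.2 (ZMod.val_lt t)) (fun k _ => Finset.mem_univ _)
        (fun t _ => ZMod.natCast_rightInverse t) (fun k hk => ZMod.val_natCast_of_lt
          (Finset.mem_range.1 hk)) (fun t _ => ?_)
      rw [hc]
      simp only [ZMod.natCast_rightInverse t]
    rw [h1, hPm, ← Finset.sum_product']
    refine Finset.sum_nbij' (fun k => (k % m, k / m)) (fun rs => rs.1 + rs.2 * m)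
      (fun k hk => ?_) (fun rs hrs => ?_) (fun k hk => ?_) (fun rs hrs => ?_) (fun k hk => ?_)
    · refine Finset.mem_product.2 ⟨Finset.mem_range.2 (Nat.mod_lt _ hm0), Finset.mem_range.2 ?_⟩
      rw [Nat.div_lt_iff_lt_mul hm0]
      rw [mul_comm]
      exact Finset.mem_range.1 hk
    · rw [Finset.mem_range]
      have h1 := Finset.mem_range.1 (Finset.mem_product.1 hrs).1
      have h2 := Finset.mem_range.1 (Finset.mem_product.1 hrs).2
      calc rs.1 + rs.2 * m < m + rs.2 * m := by omega
        _ = (rs.2 + 1) * m := by ring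
        _ ≤ p * m := Nat.mul_le_mul_right m h2
        _ = m * p := mul_comm _ _
    · exact Nat.mod_add_div' k m
    · have h1 := Finset.mem_range.1 (Finset.mem_product.1 hrs).1
      have : (rs.1 + rs.2 * m) % m = rs.1 := by
        rw [Nat.add_mul_mod_self_right, Nat.mod_eq_of_lt h1]
      have h2 : (rs.1 + rs.2 * m) / m = rs.2 := by
        rw [Nat.add_mul_div_right _ _ hm0, Nat.div_eq_of_lt h1, zero_add]
      exact Prod.ext this h2
    · rw [Nat.mod_add_div']
  -- the geometric sum vanishing
  have hgeo : ∀ r : ℕ, ∑ s ∈ Finset.range p, ζ ^ (r + s * m) = 0 := by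
    have hω : IsPrimitiveRoot (ζ ^ m) p := hζ.pow hP0 hPm
    intro r
    have : ∑ s ∈ Finset.range p, ζ ^ (r + s * m) = ζ ^ r * ∑ s ∈ Finset.range p, (ζ ^ m) ^ s := by
      rw [Finset.mul_sum]
      refine Finset.sum_congr rfl fun s _ => ?_
      rw [pow_add, ← pow_mul, mul_comm s m]
    rw [this, hω.geom_sum_eq_zero hp.one_lt, mul_zero]
  constructor
  · intro h0 t t' htt
    have hone : p - 1 + 1 = p := Nat.succ_pred_eq_of_pos hp.pos
    set q : Polynomial ℚ := ∑ r ∈ Finset.range m, ∑ s ∈ Finset.range (p - 1),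
        Polynomial.C ((c (r + s * m) : ℚ) - (c (r + (p - 1) * m) : ℚ)) *
          Polynomial.X ^ (r + s * m) with hq
    have hrowsum : ∀ r : ℕ,
        ∑ s ∈ Finset.range (p - 1),
          ((c (r + s * m) : ℂ) - (c (r + (p - 1) * m) : ℂ)) * ζ ^ (r + s * m)
        = ∑ s ∈ Finset.range p, (c (r + s * m) : ℂ) * ζ ^ (r + s * m) := by
      intro r
      have hlast : ∑ s ∈ Finset.range (p - 1), ζ ^ (r + s * m) = -ζ ^ (r + (p - 1) * m) := by
        have h := hgeo r
        rw [← hone, Finset.sum_range_succ] at h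
        exact eq_neg_of_add_eq_zero_left h
      have hsplit : ∑ s ∈ Finset.range (p - 1),
          ((c (r + s * m) : ℂ) - (c (r + (p - 1) * m) : ℂ)) * ζ ^ (r + s * m)
          = (∑ s ∈ Finset.range (p - 1), (c (r + s * m) : ℂ) * ζ ^ (r + s * m))
            - (c (r + (p - 1) * m) : ℂ) * ∑ s ∈ Finset.range (p - 1), ζ ^ (r + s * m) := by
        rw [Finset.mul_sum, ← Finset.sum_sub_distrib]
        exact Finset.sum_congr rfl fun s _ => by ring
      rw [hsplit, hlast]
      conv_rhs => rw [← hone, Finset.sum_range_succ]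
      ring
    have haev : Polynomial.aeval ζ q = 0 := by
      rw [hq, map_sum]
      have : ∀ r ∈ Finset.range m, Polynomial.aeval ζ
          (∑ s ∈ Finset.range (p - 1),
            Polynomial.C ((c (r + s * m) : ℚ) - (c (r + (p - 1) * m) : ℚ)) *
              Polynomial.X ^ (r + s * m))
          = ∑ s ∈ Finset.range p, (c (r + s * m) : ℂ) * ζ ^ (r + s * m) := by
        intro r _
        rw [map_sum, ← hrowsum r]
        refine Finset.sum_congr rfl fun s _ => ?_
        rw [map_mul, map_pow, Polynomial.aeval_X, Polynomial.aeval_C]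
        norm_num
      rw [Finset.sum_congr rfl this, ← hsum2, h0]
    have hq0 : q = 0 := by
      by_contra hne
      have hdeg := minpoly.degree_le_of_ne_zero ℚ ζ hne haev
      have hmin : minpoly ℚ ζ = Polynomial.cyclotomic (p ^ n) ℚ :=
        (Polynomial.cyclotomic_eq_minpoly_rat hζ hP0).symm
      have htot : (minpoly ℚ ζ).degree = ((m * (p - 1) : ℕ) : WithBot ℕ) := by
        rw [hmin, Polynomial.degree_cyclotomic, Nat.totient_prime_pow hp hn]
      have hdq : q.degree ≤ ((m * (p - 1) - 1 : ℕ) : WithBot ℕ) := by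
        rw [hq]
        refine (Polynomial.degree_sum_le _ _).trans (Finset.sup_le fun r hr =>
          (Polynomial.degree_sum_le _ _).trans (Finset.sup_le fun s hs => ?_))
        refine (Polynomial.degree_C_mul_X_pow_le _ _).trans ?_
        have hr' := Finset.mem_range.1 hr
        have hs' := Finset.mem_range.1 hs
        have hbound : r + s * m < m * (p - 1) := by
          calc r + s * m < m + s * m := by omega
            _ = (s + 1) * m := by ring
            _ ≤ (p - 1) * m := Nat.mul_le_mul_right m (by omega)
            _ = m * (p - 1) := mul_comm _ _
        exact_mod_cast Nat.cast_le.2 (Nat.le_pred_of_lt hbound)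
      have hle : ((m * (p - 1) : ℕ) : WithBot ℕ) ≤ ((m * (p - 1) - 1 : ℕ) : WithBot ℕ) :=
        htot ▸ (hdeg.trans hdq)
      have hle' : m * (p - 1) ≤ m * (p - 1) - 1 := by exact_mod_cast hle
      have hpos : 0 < m * (p - 1) := Nat.mul_pos hm0 (by have := hp.one_lt; omega)
      exact (Nat.lt_irrefl _ (hle'.trans_lt (Nat.sub_lt hpos one_pos))).elim
    have hinj : ∀ r₁ < m, ∀ r₂ < m, ∀ s₁ s₂ : ℕ,
        r₁ + s₁ * m = r₂ + s₂ * m → r₁ = r₂ ∧ s₁ = s₂ := by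
      intro r₁ h₁ r₂ h₂ s₁ s₂ h
      have hr : r₁ = r₂ := by
        have h' := congrArg (· % m) h
        simpa [Nat.add_mul_mod_self_right, Nat.mod_eq_of_lt h₁, Nat.mod_eq_of_lt h₂] using h'
      subst hr
      exact ⟨rfl, Nat.eq_of_mul_eq_mul_right hm0 (Nat.add_left_cancel h)⟩
    have hcoeff : ∀ r < m, ∀ s < p - 1, c (r + s * m) = c (r + (p - 1) * m) := by
      intro r hr s hs
      have h1 : q.coeff (r + s * m) = (c (r + s * m) : ℚ) - (c (r + (p - 1) * m) : ℚ) := by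
        rw [hq, Polynomial.finset_sum_coeff, Finset.sum_eq_single r]
        · rw [Polynomial.finset_sum_coeff, Finset.sum_eq_single s]
          · rw [Polynomial.coeff_C_mul, Polynomial.coeff_X_pow, if_pos rfl, mul_one]
          · intro s' hs' hne
            rw [Polynomial.coeff_C_mul, Polynomial.coeff_X_pow, if_neg, mul_zero]
            intro habs
            exact hne (hinj r hr r hr s' s habs.symm).2
          · intro h; exact absurd (Finset.mem_range.2 hs) h
        · intro r' hr' hne
          rw [Polynomial.finset_sum_coeff]
          refine Finset.sum_eq_zero fun s' hs' => ?_
          rw [Polynomial.coeff_C_mul, Polynomial.coeff_X_pow, if_neg, mul_zero]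
          intro habs
          exact hne (hinj r' (Finset.mem_range.1 hr') r hr s' s habs.symm).1
        · intro h; exact absurd (Finset.mem_range.2 hr) h
      rw [hq0, Polynomial.coeff_zero] at h1
      have h2 : (c (r + s * m) : ℚ) = (c (r + (p - 1) * m) : ℚ) := by linarith
      exact_mod_cast h2
    have hclaim : ∀ k, k < p ^ n → c k = c (k % m + (p - 1) * m) := by
      intro k hk
      have hr : k % m < m := Nat.mod_lt _ hm0
      have hs : k / m < p := by
        rw [Nat.div_lt_iff_lt_mul hm0, mul_comm]; rwa [hPm] at hk
      by_cases hcase : k / m = p - 1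
      · conv_lhs => rw [← Nat.mod_add_div' k m, hcase]
      · have hslt : k / m < p - 1 := by omega
        have h := hcoeff (k % m) hr (k / m) hslt
        rwa [Nat.mod_add_div'] at h
    have hTt : (A.filter fun x => inner' p n x d = t).card = c t.val := by
      have hcast : ((t.val : ℕ) : ZMod (p ^ n)) = t := ZMod.natCast_rightInverse t
      rw [hc]
      simp only [hcast]
    have hTt' : (A.filter fun x => inner' p n x d = t').card = c t'.val := by
      have hcast : ((t'.val : ℕ) : ZMod (p ^ n)) = t' := ZMod.natCast_rightInverse t'
      rw [hc]
      simp only [hcast]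
    have hmm : t.val % m = t'.val % m := htt
    rw [hTt, hTt', hclaim t.val (ZMod.val_lt t), hclaim t'.val (ZMod.val_lt t'), hmm]
  · intro heq
    rw [hsum2]
    refine Finset.sum_eq_zero fun r hr => ?_
    have hr' := Finset.mem_range.1 hr
    have hconst : ∀ s ∈ Finset.range p, (c (r + s * m) : ℂ) = (c r : ℂ) := by
      intro s hs
      have hs' := Finset.mem_range.1 hs
      have hlt : r + s * m < p ^ n := by
        rw [hPm]
        calc r + s * m < m + s * m := by omega
          _ = (s + 1) * m := by ring
          _ ≤ p * m := Nat.mul_le_mul_right m hs'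
          _ = m * p := mul_comm _ _
      have hrlt : r < p ^ n := lt_of_lt_of_le hr'
        (by rw [hPm]; exact Nat.le_mul_of_pos_right m hp.pos)
      have hmod : (((r + s * m : ℕ) : ZMod (p ^ n))).val ≡
          (((r : ℕ) : ZMod (p ^ n))).val [MOD p ^ (n - 1)] := by
        rw [ZMod.val_natCast_of_lt hlt, ZMod.val_natCast_of_lt hrlt]
        show (r + s * m) % m = r % m
        exact Nat.add_mul_mod_self_right r s m
      have := heq _ _ hmod
      rw [hc]
      exact_mod_cast this
    calc ∑ s ∈ Finset.range p, (c (r + s * m) : ℂ) * ζ ^ (r + s * m)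
        = (c r : ℂ) * ∑ s ∈ Finset.range p, ζ ^ (r + s * m) := by
          rw [Finset.mul_sum]
          exact Finset.sum_congr rfl fun s hs => by rw [hconst s hs]
      _ = 0 := by rw [hgeo r, mul_zero]
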